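/- The linear map Ĝ on F̂ is a coderivation with respect to Δ̂, i.e. Δ̂ ∘ Ĝ = (id ⊗ Ĝ + Ĝ ⊗ id) ∘ Δ̂. -/

import Mathlib

open scoped TensorProduct

/-- cd-monomials: `false` is the letter `c`, `true` is the letter `d`. -/
abbrev Mon := List Bool

/-- The polynomial algebra `F = ℚ⟨c,d⟩`. -/
abbrev F := MonoidAlgebra ℚ (FreeMonoid Bool)

noncomputable def mono (w : Mon) : F := MonoidAlgebra.single (FreeMonoid.ofList w) 1

noncomputable def cF : F := mono [false]
noncomputable def dF : F := mono [true]

noncomputable def gLetter : Bool → F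
  | false => dF
  | true  => cF * dF

noncomputable def gMon : Mon → F
  | [] => 0
  | a :: t => gLetter a * mono t + mono [a] * gMon t

/-- The derivation `G` with `G c = d`, `G d = cd`. -/
noncomputable def G : F →ₗ[ℚ] F :=
  Finsupp.lsum ℚ (fun w => LinearMap.toSpanSingleton ℚ F (gMon (FreeMonoid.toList w)))
    ∘ₗ (MonoidAlgebra.coeffLinearEquiv ℚ).toLinearMap

/-- `Psi n` is the cd-index of the Boolean lattice of rank `n+1`. -/
noncomputable def Psi : ℕ → F
  | 0 => 1
  | n+1 => Psi n * cF + G (Psi n)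

/-- degree of a cd-monomial (`c` has degree 1, `d` degree 2). -/
def deg (w : Mon) : ℕ := w.length + w.count true

/-- `beta v` : coefficient of `v` in the cd-index of the Boolean lattice of rank `deg v + 1`. -/
noncomputable def beta (w : Mon) : ℚ := (Psi (deg w)).coeff (FreeMonoid.ofList w)
/-- `F̂ = ℚ·e ⊕ F`, with basis indexed by `Option Mon`; `none` is the element `e`. -/
abbrev Fhat := Option Mon →₀ ℚ

noncomputable def ehat : Fhat := Finsupp.single none 1

/-- the inclusion `F → F̂`. -/
noncomputable def ι : F →ₗ[ℚ] Fhat :=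
  Finsupp.lsum ℚ (fun w =>
    LinearMap.toSpanSingleton ℚ Fhat (Finsupp.single (some (FreeMonoid.toList w)) 1))
    ∘ₗ (MonoidAlgebra.coeffLinearEquiv ℚ).toLinearMap

noncomputable def deltaLetter : Bool → F ⊗[ℚ] F
  | false => (2 : ℚ) • ((1 : F) ⊗ₜ (1 : F))
  | true  => (1 : F) ⊗ₜ cF + cF ⊗ₜ (1 : F)

/-- `Δ` on monomials, via `Δ(uv) = Δ(u)v + uΔ(v)`. -/
noncomputable def deltaMon : Mon → F ⊗[ℚ] F
  | [] => 0
  | a :: t =>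
      TensorProduct.map LinearMap.id (LinearMap.mulRight ℚ (mono t)) (deltaLetter a)
        + TensorProduct.map (LinearMap.mulLeft ℚ (mono [a])) LinearMap.id (deltaMon t)

noncomputable def deltaHatB : Option Mon → Fhat ⊗[ℚ] Fhat
  | none => ehat ⊗ₜ ehat
  | some w => TensorProduct.map ι ι (deltaMon w) + ehat ⊗ₜ ι (mono w) + ι (mono w) ⊗ₜ ehat

/-- The coproduct `Δ̂` on `F̂`. -/
noncomputable def deltaHat : Fhat →ₗ[ℚ] Fhat ⊗[ℚ] Fhat :=
  Finsupp.lsum ℚ fun o => LinearMap.toSpanSingleton ℚ (Fhat ⊗[ℚ] Fhat) (deltaHatB o)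

noncomputable def gHatB : Option Mon → Fhat
  | none => ι 1
  | some w => ι (gMon w + mono w * cF)

/-- The map `Ĝ` on `F̂`: `Ĝ e = 1`, `Ĝ u = G u + u c`. -/
noncomputable def gHat : Fhat →ₗ[ℚ] Fhat :=
  Finsupp.lsum ℚ fun o => LinearMap.toSpanSingleton ℚ Fhat (gHatB o)



/-! ### Auxiliary lemmas -/

noncomputable def Delta : F →ₗ[ℚ] F ⊗[ℚ] F :=
  Finsupp.lsum ℚ (fun w => LinearMap.toSpanSingleton ℚ (F ⊗[ℚ] F) (deltaMon (FreeMonoid.toList w)))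
    ∘ₗ (MonoidAlgebra.coeffLinearEquiv ℚ).toLinearMap

lemma mono_mul (w w' : Mon) : mono w * mono w' = mono (w ++ w') := by
  simp [mono, MonoidAlgebra.single_mul_single]

lemma mono_nil : mono [] = 1 := by
  simp [mono, MonoidAlgebra.one_def]

lemma single_eq_smul_mono (m : FreeMonoid Bool) (b : ℚ) :
    (MonoidAlgebra.single m b : F) = b • mono m.toList := by
  simp [mono, MonoidAlgebra.smul_single']

lemma G_mono (w : Mon) : G (mono w) = gMon w := by
  have : (MonoidAlgebra.coeffLinearEquiv ℚ).toLinearMap (MonoidAlgebra.single (FreeMonoid.ofList w) 1 : F)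
      = Finsupp.single (FreeMonoid.ofList w) (1:ℚ) := rfl
  rw [G, mono, LinearMap.comp_apply, this]
  erw [Finsupp.lsum_single]
  rw [LinearMap.toSpanSingleton_apply_one, FreeMonoid.toList_ofList]

lemma Delta_mono (w : Mon) : Delta (mono w) = deltaMon w := by
  have : (MonoidAlgebra.coeffLinearEquiv ℚ).toLinearMap (MonoidAlgebra.single (FreeMonoid.ofList w) 1 : F)
      = Finsupp.single (FreeMonoid.ofList w) (1:ℚ) := rfl
  rw [Delta, mono, LinearMap.comp_apply, this]
  erw [Finsupp.lsum_single]
  rw [LinearMap.toSpanSingleton_apply_one, FreeMonoid.toList_ofList]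

lemma iota_mono (w : Mon) : ι (mono w) = Finsupp.single (some w) 1 := by
  have : (MonoidAlgebra.coeffLinearEquiv ℚ).toLinearMap (MonoidAlgebra.single (FreeMonoid.ofList w) 1 : F)
      = Finsupp.single (FreeMonoid.ofList w) (1:ℚ) := rfl
  rw [ι, mono, LinearMap.comp_apply, this]
  erw [Finsupp.lsum_single]
  rw [LinearMap.toSpanSingleton_apply_one, FreeMonoid.toList_ofList]

lemma gHat_single (o : Option Mon) : gHat (Finsupp.single o 1) = gHatB o := by
  rw [gHat]
  erw [Finsupp.lsum_single]
  rw [LinearMap.toSpanSingleton_apply_one]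

lemma deltaHat_single (o : Option Mon) : deltaHat (Finsupp.single o 1) = deltaHatB o := by
  rw [deltaHat]
  erw [Finsupp.lsum_single]
  rw [LinearMap.toSpanSingleton_apply_one]

lemma map_id_mulRight (v : F) (X : F ⊗[ℚ] F) :
    TensorProduct.map LinearMap.id (LinearMap.mulRight ℚ v) X = X * ((1:F) ⊗ₜ v) := by
  induction X using TensorProduct.induction_on with
  | zero => simp
  | tmul a b => simp [Algebra.TensorProduct.tmul_mul_tmul]
  | add x y hx hy => simp [hx, hy, add_mul]

lemma map_mulLeft_id (u : F) (X : F ⊗[ℚ] F) :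
    TensorProduct.map (LinearMap.mulLeft ℚ u) LinearMap.id X = (u ⊗ₜ (1:F)) * X := by
  induction X using TensorProduct.induction_on with
  | zero => simp
  | tmul a b => simp [Algebra.TensorProduct.tmul_mul_tmul]
  | add x y hx hy => simp [hx, hy, mul_add]

lemma deltaMon_cons (a : Bool) (t : Mon) :
    deltaMon (a :: t) = deltaLetter a * ((1:F) ⊗ₜ mono t) + (mono [a] ⊗ₜ (1:F)) * deltaMon t := by
  rw [deltaMon, map_id_mulRight, map_mulLeft_id]

lemma gMon_letter (a : Bool) : gMon [a] = gLetter a := by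
  simp [gMon, mono_nil]

lemma gMon_append (w w' : Mon) :
    gMon (w ++ w') = gMon w * mono w' + mono w * gMon w' := by
  induction w with
  | nil => simp [gMon, mono_nil]
  | cons a t ih =>
      show gMon (a :: (t ++ w')) = _
      rw [gMon, ih, gMon, show mono (a::t) = mono [a] * mono t from (mono_mul [a] t).symm,
        show mono (t ++ w') = mono t * mono w' from (mono_mul t w').symm]
      noncomm_ring

lemma deltaMon_append (w w' : Mon) :
    deltaMon (w ++ w') = deltaMon w * ((1:F) ⊗ₜ mono w')
      + (mono w ⊗ₜ (1:F)) * deltaMon w' := by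
  induction w with
  | nil =>
      simp only [List.nil_append, deltaMon, mono_nil]
      rw [← Algebra.TensorProduct.one_def, zero_mul, one_mul, zero_add]
  | cons a t ih =>
      show deltaMon (a :: (t ++ w')) = _
      rw [deltaMon_cons, ih, deltaMon_cons,
        show mono (a::t) = mono [a] * mono t from (mono_mul [a] t).symm,
        show mono (t ++ w') = mono t * mono w' from (mono_mul t w').symm]
      rw [show (mono [a] * mono t) ⊗ₜ[ℚ] (1:F) = (mono [a] ⊗ₜ (1:F)) * (mono t ⊗ₜ (1:F)) by
        rw [Algebra.TensorProduct.tmul_mul_tmul, one_mul]]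
      rw [show ((1:F) ⊗ₜ[ℚ] (mono t * mono w')) = ((1:F) ⊗ₜ mono t) * ((1:F) ⊗ₜ mono w') by
        rw [Algebra.TensorProduct.tmul_mul_tmul, one_mul]]
      noncomm_ring

lemma G_mul (x y : F) : G (x * y) = G x * y + x * G y := by
  induction x using MonoidAlgebra.induction_linear with
  | zero => simp
  | add u v hu hv => simp only [add_mul, map_add, hu, hv]; abel
  | single m b =>
    induction y using MonoidAlgebra.induction_linear with
    | zero => simp
    | add u v hu hv => simp only [mul_add, map_add, hu, hv]; abel
    | single m' b' =>
        rw [single_eq_smul_mono, single_eq_smul_mono]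
        simp only [smul_mul_smul_comm, mul_smul_comm, smul_mul_assoc, map_smul, mono_mul,
          G_mono, gMon_append, smul_smul, mul_comm b' b, smul_add]

lemma Delta_mul (x y : F) :
    Delta (x * y) = Delta x * ((1:F) ⊗ₜ y) + (x ⊗ₜ (1:F)) * Delta y := by
  induction x using MonoidAlgebra.induction_linear with
  | zero => simp
  | add u v hu hv =>
      simp only [add_mul, map_add, hu, hv, TensorProduct.add_tmul]
      abel
  | single m b =>
    induction y using MonoidAlgebra.induction_linear with
    | zero => simp
    | add u v hu hv =>
        simp only [mul_add, map_add, hu, hv, TensorProduct.tmul_add]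
        abel
    | single m' b' =>
        rw [single_eq_smul_mono, single_eq_smul_mono]
        simp only [smul_mul_smul_comm, mul_smul_comm, smul_mul_assoc, map_smul, mono_mul,
          Delta_mono, deltaMon_append, TensorProduct.smul_tmul', TensorProduct.tmul_smul,
          smul_smul, mul_comm b' b, smul_add]
        simp only [← TensorProduct.smul_tmul', smul_mul_assoc, mul_smul_comm, smul_smul,
          mul_comm b' b]


lemma deltaMon_nil : deltaMon [] = 0 := rfl

lemma deltaMon_singleton (a : Bool) : deltaMon [a] = deltaLetter a := by
  rw [deltaMon_cons, deltaMon, mono_nil, ← Algebra.TensorProduct.one_def]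
  simp

lemma G_one : G (1 : F) = 0 := by rw [← mono_nil, G_mono]; rfl

lemma Delta_one : Delta (1 : F) = 0 := by rw [← mono_nil, Delta_mono]; rfl

lemma map_id_G_left (u : F) (X : F ⊗[ℚ] F) :
    TensorProduct.map LinearMap.id G ((u ⊗ₜ (1:F)) * X)
      = (u ⊗ₜ (1:F)) * TensorProduct.map LinearMap.id G X := by
  induction X using TensorProduct.induction_on with
  | zero => simp
  | tmul a b => simp [Algebra.TensorProduct.tmul_mul_tmul]
  | add x y hx hy => simp [mul_add, hx, hy]

lemma map_G_id_left (u : F) (X : F ⊗[ℚ] F) :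
    TensorProduct.map G LinearMap.id ((u ⊗ₜ (1:F)) * X)
      = (G u ⊗ₜ (1:F)) * X + (u ⊗ₜ (1:F)) * TensorProduct.map G LinearMap.id X := by
  induction X using TensorProduct.induction_on with
  | zero => simp
  | tmul a b =>
      simp [Algebra.TensorProduct.tmul_mul_tmul, G_mul, TensorProduct.add_tmul]
  | add x y hx hy =>
      simp only [mul_add, map_add, hx, hy]
      abel

lemma key (w : Mon) : Delta (gMon w) =
    TensorProduct.map LinearMap.id G (deltaMon w)
      + TensorProduct.map G LinearMap.id (deltaMon w)
      + deltaMon w * (cF ⊗ₜ (1:F))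
      + (1:F) ⊗ₜ mono w - mono w ⊗ₜ (1:F) := by
  induction w with
  | nil =>
      simp [gMon, deltaMon, mono_nil]
  | cons a t ih =>
      rw [gMon, map_add, Delta_mul, Delta_mul, Delta_mono, Delta_mono, ih,
        show mono (a::t) = mono [a] * mono t from (mono_mul [a] t).symm]
      simp only [deltaMon_cons, deltaMon_nil, mono_nil, mul_zero, zero_mul, add_zero,
        zero_add, mul_one, one_mul, ← Algebra.TensorProduct.one_def]
      simp only [map_add, map_id_G_left, map_G_id_left, G_mono, gMon_letter, add_mul]
      cases a
      · simp only [gLetter, deltaLetter, dF, cF, Delta_mono, deltaMon_singleton, smul_mul_assoc,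
          Algebra.TensorProduct.tmul_mul_tmul, one_mul, mul_one, map_smul, map_add,
          TensorProduct.map_tmul, LinearMap.id_coe, id_eq, G_one, G_mono,
          TensorProduct.zero_tmul, TensorProduct.tmul_zero, add_zero, zero_add, two_smul,
          mul_add, mul_sub, add_mul, sub_mul]
        noncomm_ring
      · simp only [gLetter, deltaLetter, Delta_mul, G_mul, dF, cF, Delta_mono,
          deltaMon_singleton, smul_mul_assoc,
          Algebra.TensorProduct.tmul_mul_tmul, one_mul, mul_one, map_smul, map_add,
          TensorProduct.map_tmul, LinearMap.id_coe, id_eq, G_one, G_mono,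
          TensorProduct.zero_tmul, TensorProduct.tmul_zero, add_zero, zero_add, two_smul,
          mul_add, mul_sub, add_mul, sub_mul, TensorProduct.tmul_add, TensorProduct.add_tmul,
          gMon_letter]
        noncomm_ring
        try module


lemma ehat_def : ehat = Finsupp.single none 1 := rfl

lemma gHat_iota (u : F) : gHat (ι u) = ι (G u + u * cF) := by
  induction u using MonoidAlgebra.induction_linear with
  | zero => simp
  | add x y hx hy =>
      simp only [map_add, hx, hy, add_mul]
      abel
  | single m b =>
      rw [single_eq_smul_mono]
      simp only [map_smul, smul_mul_assoc, ← smul_add]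
      congr 1
      rw [iota_mono, gHat_single]
      show ι (gMon m.toList + mono m.toList * cF) = _
      rw [G_mono]

lemma deltaHat_iota (u : F) :
    deltaHat (ι u) = TensorProduct.map ι ι (Delta u) + ehat ⊗ₜ ι u + ι u ⊗ₜ ehat := by
  induction u using MonoidAlgebra.induction_linear with
  | zero => simp
  | add x y hx hy =>
      simp only [map_add, hx, hy, TensorProduct.add_tmul, TensorProduct.tmul_add]
      module
  | single m b =>
      rw [single_eq_smul_mono]
      simp only [map_smul, ← TensorProduct.smul_tmul', TensorProduct.tmul_smul, ← smul_add]
      congr 1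
      rw [iota_mono, deltaHat_single, Delta_mono]
      simp [deltaHatB, iota_mono]

lemma map_id_gHat_iota (X : F ⊗[ℚ] F) :
    TensorProduct.map LinearMap.id gHat (TensorProduct.map ι ι X)
      = TensorProduct.map ι ι (TensorProduct.map LinearMap.id G X + X * ((1:F) ⊗ₜ cF)) := by
  induction X using TensorProduct.induction_on with
  | zero => simp
  | tmul a b =>
      simp only [TensorProduct.map_tmul, LinearMap.id_coe, id_eq, gHat_iota,
        Algebra.TensorProduct.tmul_mul_tmul, one_mul, mul_one, map_add, TensorProduct.tmul_add]
  | add x y hx hy =>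
      simp only [map_add, hx, hy, add_mul]
      exact (add_add_add_comm _ _ _ _).symm

lemma map_gHat_id_iota (X : F ⊗[ℚ] F) :
    TensorProduct.map gHat LinearMap.id (TensorProduct.map ι ι X)
      = TensorProduct.map ι ι (TensorProduct.map G LinearMap.id X + X * (cF ⊗ₜ (1:F))) := by
  induction X using TensorProduct.induction_on with
  | zero => simp
  | tmul a b =>
      simp only [TensorProduct.map_tmul, LinearMap.id_coe, id_eq, gHat_iota,
        Algebra.TensorProduct.tmul_mul_tmul, mul_one, one_mul, map_add, TensorProduct.add_tmul]
  | add x y hx hy =>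
      simp only [map_add, hx, hy, add_mul]
      exact (add_add_add_comm _ _ _ _).symm

lemma gHat_ehat : gHat ehat = ι 1 := by
  rw [ehat_def, gHat_single]; rfl

lemma Delta_cF : Delta cF = (2:ℚ) • ((1:F) ⊗ₜ (1:F)) := by
  rw [cF, Delta_mono, deltaMon_singleton]; rfl

/-- `Ĝ` is a coderivation on `F̂` with respect to `Δ̂`:
`Δ̂ ∘ Ĝ = (id ⊗ Ĝ + Ĝ ⊗ id) ∘ Δ̂`. -/
theorem gHat_coderivation :
    deltaHat ∘ₗ gHat
      = (TensorProduct.map LinearMap.id gHat + TensorProduct.map gHat LinearMap.id)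
          ∘ₗ deltaHat := by
  apply Finsupp.lhom_ext'
  intro o
  apply LinearMap.ext_ring
  simp only [LinearMap.comp_apply, Finsupp.lsingle_apply]
  cases o with
  | none =>
      rw [gHat_single, deltaHat_single]
      show deltaHat (ι 1) = _
      rw [← mono_nil, deltaHat_iota, Delta_mono, deltaMon_nil]
      show _ = (TensorProduct.map LinearMap.id gHat + TensorProduct.map gHat LinearMap.id :
            Fhat ⊗[ℚ] Fhat →ₗ[ℚ] Fhat ⊗[ℚ] Fhat)
          (ehat ⊗ₜ ehat)
      simp only [LinearMap.add_apply, TensorProduct.map_tmul, LinearMap.id_coe, id_eq,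
        gHat_ehat, map_zero, zero_add, mono_nil]
  | some w =>
      rw [gHat_single, deltaHat_single]
      show deltaHat (ι (gMon w + mono w * cF)) = _
      rw [deltaHat_iota]
      show _ = (TensorProduct.map LinearMap.id gHat + TensorProduct.map gHat LinearMap.id :
            Fhat ⊗[ℚ] Fhat →ₗ[ℚ] Fhat ⊗[ℚ] Fhat)
          (TensorProduct.map ι ι (deltaMon w) + ehat ⊗ₜ ι (mono w) + ι (mono w) ⊗ₜ ehat)
      simp only [LinearMap.add_apply, map_add, TensorProduct.map_tmul, LinearMap.id_coe, id_eq,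
        gHat_ehat, gHat_iota, map_id_gHat_iota, map_gHat_id_iota]
      rw [key, Delta_mul, Delta_cF, Delta_mono, G_mono]
      simp only [map_add, map_sub, map_smul, mul_smul_comm, TensorProduct.map_tmul,
        Algebra.TensorProduct.tmul_mul_tmul, one_mul, mul_one, TensorProduct.tmul_add,
        TensorProduct.add_tmul]
      module
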